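/- arXiv:1808.07762 — 2 statements merged into one kernel-verified Lean document; each statement's English description precedes it below -/
import Mathlib

section
/- For every nonnegative integer K there exist a positive integer d, a finite connected multigraph (V, E, o, t, inv) with Betti number β = #E/2 − #V + 1, a 1-form x : E → ℝ^d whose set of fluxes along all closed walks equals ℤ^d, a 1-form α : E → ℝ, and minimal forms μ ∈ F(x) and φ ∈ F(α), such that β − (1/2)·#(supp μ ∪ supp φ) = K. (Paper: Proposition 2.2(iv): the difference β − I_{μ,φ}, where I_{μ,φ} = (1/2)·#(supp μ ∪ supp φ), can be any nonnegative integer; stated on the fundamental graph.) -/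
open scoped Classical
open Finset

noncomputable section

/-- The degree of a vertex: the number of oriented edges starting at it. -/
def mdeg {V E : Type} [Fintype E] (o : E → V) (v : V) : ℕ :=
  (Finset.univ.filter fun e => o e = v).card

/-- The combinatorial magnetic Laplacian `Δ_α`. -/
def magLap {V E : Type} [Fintype E] (o t : E → V) (α : E → ℝ)
    (f : V → ℂ) (v : V) : ℂ :=
  ∑ e ∈ Finset.univ.filter (fun e => o e = v),
    (f v - Complex.exp (Complex.I * (α e : ℂ)) * f (t e))

/-- The fiber magnetic Laplacian `Δ_{m,φ}(θ)`. -/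
def fiberLap {V E : Type} [Fintype E] {d : ℕ} (o t : E → V)
    (m : E → Fin d → ℝ) (φ : E → ℝ) (θ : Fin d → ℝ) (f : V → ℂ) (v : V) : ℂ :=
  (mdeg o v : ℂ) * f v -
    ∑ e ∈ Finset.univ.filter (fun e => o e = v),
      Complex.exp (Complex.I * ((φ e + ∑ i, m e i * θ i : ℝ) : ℂ)) * f (t e)

/-- Standard inner product on `ℂ^V` (conjugate-linear in the first argument). -/
def dotC {V : Type} [Fintype V] (f g : V → ℂ) : ℂ :=
  ∑ v, (starRingEnd ℂ) (f v) * g v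

/-- `lam` lists the eigenvalues of the operator `T` on `ℂ^V` in nondecreasing
order, counted with multiplicity (witnessed by an orthonormal eigenbasis). -/
def IsEigList {V : Type} [Fintype V] (T : (V → ℂ) → (V → ℂ))
    (lam : Fin (Fintype.card V) → ℝ) : Prop :=
  Monotone lam ∧ ∃ u : Fin (Fintype.card V) → (V → ℂ),
    (∀ i j, dotC (u i) (u j) = if i = j then (1 : ℂ) else 0) ∧
    ∀ i, T (u i) = fun v => ((lam i : ℝ) : ℂ) * u i v

/-- A closed walk in the multigraph. -/
def IsClosedWalk {V E : Type} (o t : E → V) {k : ℕ} (c : Fin (k + 1) → E) : Prop :=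
  (∀ i : Fin k, t (c i.castSucc) = o (c i.succ)) ∧ t (c (Fin.last k)) = o (c 0)

/-- Two forms have the same flux along every closed walk. -/
def SameFlux {V E W : Type} [AddCommMonoid W] (o t : E → V) (b b' : E → W) : Prop :=
  ∀ (k : ℕ) (c : Fin (k + 1) → E), IsClosedWalk o t c →
    ∑ i, b (c i) = ∑ i, b' (c i)

/-- Connectivity of the multigraph: any two distinct vertices are the endpoints
of some walk. -/
def MGConnected {V E : Type} (o t : E → V) : Prop :=
  ∀ u v : V, u ≠ v → ∃ (k : ℕ) (c : Fin (k + 1) → E),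
    (∀ i : Fin k, t (c i.castSucc) = o (c i.succ)) ∧ o (c 0) = u ∧ t (c (Fin.last k)) = v

/-- The set of fluxes of a form along all closed walks. -/
def fluxSet {V E W : Type} [AddCommMonoid W] (o t : E → V) (b : E → W) : Set W :=
  {w | ∃ (k : ℕ) (c : Fin (k + 1) → E), IsClosedWalk o t c ∧ ∑ i, b (c i) = w}

/-- The number of oriented edges in the support of a form. -/
def suppCard {E : Type} [Fintype E] {W : Type} [Zero W] (b : E → W) : ℕ :=
  (Finset.univ.filter fun e => b e ≠ 0).card

/-- The integer lattice `ℤ^d` inside `ℝ^d`. -/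
def intLattice (d : ℕ) : Set (Fin d → ℝ) :=
  {w | ∀ i, ∃ z : ℤ, w i = (z : ℝ)}

/-! Take the bouquet of `K + 1` loops at a single vertex, so `β = K + 1`, let `x` be `±1` on
one loop and `0` on the others, and `α = 0`. Each single edge of a bouquet is a closed walk,
so a 1-form on it is determined by its fluxes: `F(x) = {x}` and `F(α) = {0}`. Hence `μ = x`
and `φ = 0`, whose supports together are the two orientations of one loop, so that
`β - I_{μ,φ} = (K + 1) - 1 = K`. The fluxes of `x` are all of `ℤ`, going around the loop
carrying `x` as often as needed in either direction. -/

theorem Fin.rev_ne_self_of_even {n : ℕ} (hn : Even n) (e : Fin n) : e.rev ≠ e := by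
  obtain ⟨m, rfl⟩ := hn
  intro h
  have := congrArg Fin.val h
  rw [Fin.val_rev] at this
  omega

theorem Fin.zero_ne_last_of_ne_zero {n : ℕ} (hn : n ≠ 0) : (0 : Fin (n + 1)) ≠ Fin.last n := by
  simpa [Fin.ext_iff] using hn.symm

theorem SameFlux.eq_of_forall_loop {V E W : Type} [AddCommMonoid W] {o t : E → V}
    {x b : E → W} (hloop : ∀ e, o e = t e) (h : SameFlux o t x b) : x = b :=
  funext fun e => by simpa using h 0 (fun _ => e) ⟨fun i => i.elim0, (hloop e).symm⟩

theorem fluxSet_subset_intLattice {V E : Type} {o t : E → V} {d : ℕ} {x : E → Fin d → ℝ}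
    (hx : ∀ e, x e ∈ intLattice d) : fluxSet o t x ⊆ intLattice d := by
  rintro _ ⟨k, c, -, rfl⟩ i
  choose z hz using hx
  exact ⟨∑ j, z (c j) i, by simp [Finset.sum_apply, hz]⟩

section OneVertex

variable {V E : Type} [Subsingleton V] (o t : E → V)

theorem isClosedWalk_of_subsingleton {k : ℕ} (c : Fin (k + 1) → E) : IsClosedWalk o t c :=
  ⟨fun _ => Subsingleton.elim _ _, Subsingleton.elim _ _⟩

theorem mgConnected_of_subsingleton : MGConnected o t :=
  fun u v huv => absurd (Subsingleton.elim u v) huv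

theorem zsmul_mem_fluxSet {W : Type} [AddCommGroup W] {x : E → W} {e e' : E} {w : W}
    (he : x e = w) (he' : x e' = -w) (z : ℤ) : z • w ∈ fluxSet o t x := by
  rcases z with (_ | m) | m
  · exact ⟨1, ![e, e'], isClosedWalk_of_subsingleton o t _, by simp [he, he']⟩
  · exact ⟨m, fun _ => e, isClosedWalk_of_subsingleton o t _, by simp [he, add_smul]⟩
  · refine ⟨m, fun _ => e', isClosedWalk_of_subsingleton o t _, ?_⟩
    simp [he', Int.negSucc_eq, add_smul]

end OneVertex

section Bouquet

variable {W : Type} [AddCommGroup W] {n : ℕ}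

/-- On the bouquet with edge set `Fin (n + 1)` and inversion `Fin.rev`, the edges `0` and
`Fin.last n` are the two orientations of one loop. -/
def loopForm (n : ℕ) (w : W) (e : Fin (n + 1)) : W :=
  if e = 0 then w else if e = Fin.last n then -w else 0

theorem loopForm_rev (hn : n ≠ 0) (w : W) (e : Fin (n + 1)) :
    loopForm n w e.rev = -loopForm n w e := by
  by_cases he0 : e = 0
  · simp [loopForm, he0, (Fin.zero_ne_last_of_ne_zero hn).symm]
  by_cases hel : e = Fin.last n
  · simp [loopForm, hel, hn]
  have : e.rev ≠ 0 := by rwa [Ne, Fin.rev_eq_iff, Fin.rev_zero]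
  have : e.rev ≠ Fin.last n := by rwa [Ne, Fin.rev_eq_iff, Fin.rev_last]
  simp [loopForm, *]

theorem card_filter_loopForm_ne_zero (hn : n ≠ 0) {w : W} (hw : w ≠ 0)
    [DecidablePred fun e => loopForm n w e ≠ 0] :
    (univ.filter fun e => loopForm n w e ≠ 0).card = 2 := by
  rw [← card_pair (Fin.zero_ne_last_of_ne_zero hn)]
  congr 1
  ext e
  rw [mem_filter, mem_insert, mem_singleton, loopForm]
  split_ifs <;> simp_all [(Fin.zero_ne_last_of_ne_zero hn).symm]

theorem fluxSet_loopForm {V : Type} [Subsingleton V] (o t : Fin (n + 1) → V) (hn : n ≠ 0) :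
    fluxSet o t (loopForm n (1 : Fin 1 → ℝ)) = intLattice 1 := by
  apply (fluxSet_subset_intLattice fun e i => ?_).antisymm
  · intro w hw
    obtain ⟨z, hz⟩ := hw 0
    have hw : w = z • (1 : Fin 1 → ℝ) := funext fun i => by simp [Subsingleton.elim i 0, hz]
    exact hw ▸ zsmul_mem_fluxSet o t (e := 0) (e' := Fin.last n) (by simp [loopForm])
      (by simp [loopForm, (Fin.zero_ne_last_of_ne_zero hn).symm]) z
  · unfold loopForm
    split_ifs
    exacts [⟨1, by simp⟩, ⟨-1, by simp⟩, ⟨0, by simp⟩]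

end Bouquet

/-- For every `K ≥ 0` there are `d > 0`, a finite connected multigraph, a
1-form `x : E → ℝ^d` with flux set `ℤ^d`, a 1-form `α : E → ℝ`, and minimal
forms `μ ∈ F(x)`, `φ ∈ F(α)`, such that
`β − (1/2)·#(supp μ ∪ supp φ) = K`, where `β = #E/2 − #V + 1`. -/
theorem exists_graph_with_prescribed_joint_invariant_gap (K : ℕ) :
    ∃ (d nv ne : ℕ) (o t : Fin ne → Fin nv) (inv : Fin ne → Fin ne),
      0 < d ∧ 0 < nv ∧
      (∀ e, inv e ≠ e) ∧ (∀ e, inv (inv e) = e) ∧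
      (∀ e, o (inv e) = t e) ∧ (∀ e, t (inv e) = o e) ∧
      MGConnected o t ∧
      ∃ (x : Fin ne → Fin d → ℝ) (α : Fin ne → ℝ),
        (∀ e, x (inv e) = - x e) ∧ (∀ e, α (inv e) = - α e) ∧
        fluxSet o t x = intLattice d ∧
        ∃ (μ : Fin ne → Fin d → ℝ) (φ : Fin ne → ℝ),
          (∀ e, μ (inv e) = - μ e) ∧ SameFlux o t x μ ∧
          (∀ b : Fin ne → Fin d → ℝ, (∀ e, b (inv e) = - b e) → SameFlux o t x b →
            suppCard μ ≤ suppCard b) ∧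
          (∀ e, φ (inv e) = - φ e) ∧ SameFlux o t α φ ∧
          (∀ b : Fin ne → ℝ, (∀ e, b (inv e) = - b e) → SameFlux o t α b →
            suppCard φ ≤ suppCard b) ∧
          ((((Finset.univ.filter fun e => μ e ≠ 0) ∪
              (Finset.univ.filter fun e => φ e ≠ 0)).card : ℤ)
            = (ne : ℤ) - 2 * nv + 2 - 2 * K) := by
  have hn : 2 * K + 1 ≠ 0 := by omega
  have hx := loopForm_rev hn (1 : Fin 1 → ℝ)
  refine ⟨1, 1, 2 * K + 1 + 1, fun _ => 0, fun _ => 0, Fin.rev, one_pos, one_pos,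
    Fin.rev_ne_self_of_even ⟨K + 1, by ring⟩, Fin.rev_rev, fun _ => rfl, fun _ => rfl,
    mgConnected_of_subsingleton _ _, loopForm _ 1, 0, hx, fun _ => neg_zero.symm,
    fluxSet_loopForm _ _ hn, loopForm _ 1, 0, hx, fun _ _ _ => rfl, ?minimal_μ,
    fun _ => neg_zero.symm, fun _ _ _ => rfl, ?minimal_φ, ?support⟩
  case minimal_μ => exact fun b _ hb => (hb.eq_of_forall_loop fun _ => rfl) ▸ le_rfl
  case minimal_φ => exact fun _ _ _ => by simp [suppCard]
  case support =>
    simp only [Pi.zero_apply, ne_self_iff_false, filter_false, union_empty]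
    rw [card_filter_loopForm_ne_zero hn one_ne_zero]
    push_cast
    ring
end
end

section
/- For every positive integer d there exist a finite connected multigraph (V, E, o, t, inv) and a 1-form m : E → ℝ^d taking values in ℤ^d, with #supp m = 2d and with the set of fluxes of m along all closed walks equal to ℤ^d, such that for every potential Q : V → ℝ and every 1-form φ : E → ℝ, the Lebesgue measure of the set Σ = { x ∈ ℝ : x is an eigenvalue of Δ_{m,φ}(θ) + Q for some θ ∈ ℝ^d } equals 4d = 2·#supp m; in particular the spectral estimate |Σ| ≤ 2·#supp m becomes an identity for this multigraph, for any Q and φ. (Paper: Theorem 2.5(iii) and Proposition 5.2(ii), at the level of fiber operators.) -/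
open scoped Classical
open Finset

noncomputable section

/-!
Take the bouquet of `d` loops at a single vertex, the `i`-th loop carrying the `i`-th standard
basis vector `eᵢ` (its reverse carrying `-eᵢ`). Every edge list is a closed walk, so the fluxes
form the additive monoid generated by `±eᵢ`, which is `ℤ^d`. On `ℂ^1` the fiber operator is the
scalar `2d - 2 ∑ᵢ cos (φᵢ + θᵢ) + Q`, which sweeps out exactly `[Q, Q + 4d]` as `θ` varies.
-/

open Complex

section OneVertex

variable {V E : Type} [Unique V]

theorem mdeg_of_unique [Fintype E] (o : E → V) (v : V) : mdeg o v = Fintype.card E := by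
  rw [mdeg, filter_true_of_mem fun _ _ => Subsingleton.elim _ _, card_univ]

theorem fiberLap_of_unique [Fintype E] {d : ℕ} (o t : E → V) (m : E → Fin d → ℝ) (φ : E → ℝ)
    (θ : Fin d → ℝ) (f : V → ℂ) (v : V) :
    fiberLap o t m φ θ f v =
      (Fintype.card E - ∑ e, exp (I * ((φ e + ∑ i, m e i * θ i : ℝ) : ℂ))) * f v := by
  rw [fiberLap, mdeg_of_unique, filter_true_of_mem fun _ _ => Subsingleton.elim _ _, sub_mul,
    sum_mul]
  simp only [Subsingleton.elim (t _) v]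

theorem isClosedWalk_of_unique (o t : E → V) {k : ℕ} (c : Fin (k + 1) → E) :
    IsClosedWalk o t c :=
  ⟨fun _ => Subsingleton.elim _ _, Subsingleton.elim _ _⟩

theorem mgConnected_of_unique (o t : E → V) : MGConnected o t :=
  fun u v huv => absurd (Subsingleton.elim u v) huv

theorem fluxSet_of_unique [Nonempty E] {W : Type} [AddCommGroup W] (o t : E → V)
    (inv : E → E) (b : E → W) (hb : ∀ e, b (inv e) = -b e) :
    fluxSet o t b = AddSubmonoid.closure (Set.range b) := by
  apply subset_antisymm
  · rintro _ ⟨k, c, -, rfl⟩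
    exact sum_mem fun i _ => AddSubmonoid.subset_closure ⟨c i, rfl⟩
  · let fluxes : AddSubmonoid W :=
      { carrier := fluxSet o t b
        add_mem' := by
          rintro _ _ ⟨k, c, -, rfl⟩ ⟨l, c', -, rfl⟩
          refine ⟨k + 1 + l, (Fin.append c c' : Fin (k + 1 + (l + 1)) → E),
            isClosedWalk_of_unique o t _, ?_⟩
          change ∑ i : Fin (k + 1 + (l + 1)), b (Fin.append c c' i) = _
          simp only [Fin.sum_univ_add, Fin.append_left, Fin.append_right]
        zero_mem' := by
          obtain ⟨e⟩ := ‹Nonempty E›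
          exact ⟨1, ![e, inv e], isClosedWalk_of_unique o t _, by simp [hb]⟩ }
    exact AddSubmonoid.closure_le (S := fluxes).mpr
      fun _ ⟨e, he⟩ => ⟨0, ![e], isClosedWalk_of_unique o t _, by simp [he]⟩

theorem exists_ne_zero_mul_eq_iff_of_unique (g : V → ℂ) (x : ℂ) :
    (∃ f : V → ℂ, f ≠ 0 ∧ ∀ v, g v * f v = x * f v) ↔ g default = x := by
  constructor
  · rintro ⟨f, hf, hfx⟩
    have hf₀ : f default ≠ 0 := fun h => hf (funext fun v => Unique.eq_default v ▸ h)
    exact mul_right_cancel₀ hf₀ (hfx default)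
  · intro hgx
    exact ⟨1, one_ne_zero, fun v => by rw [Unique.eq_default v, hgx]⟩

theorem fiberSpectrum_of_unique [Fintype E] {d : ℕ} (o t : E → V) (m : E → Fin d → ℝ)
    (φ : E → ℝ) (Q : V → ℝ) :
    {x : ℝ | ∃ (θ : Fin d → ℝ) (f : V → ℂ), f ≠ 0 ∧
        ∀ v, fiberLap o t m φ θ f v + (Q v : ℂ) * f v = (x : ℂ) * f v} =
      {x : ℝ | ∃ θ : Fin d → ℝ, (Fintype.card E : ℂ) -
        ∑ e, exp (I * ((φ e + ∑ i, m e i * θ i : ℝ) : ℂ)) + Q default = x} := by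
  ext x
  simp only [Set.mem_ofPred_eq, fiberLap_of_unique, ← add_mul,
    exists_ne_zero_mul_eq_iff_of_unique]

end OneVertex

theorem range_sum_cos {ι : Type} [Fintype ι] (a : ι → ℝ) :
    Set.range (fun θ : ι → ℝ => ∑ i, Real.cos (a i + θ i)) =
      Set.Icc (-(Fintype.card ι : ℝ)) (Fintype.card ι) := by
  apply subset_antisymm
  · rintro _ ⟨θ, rfl⟩
    constructor
    · simpa using sum_le_sum fun i (_ : i ∈ univ) => Real.neg_one_le_cos (a i + θ i)
    · simpa using sum_le_sum fun i (_ : i ∈ univ) => Real.cos_le_one (a i + θ i)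
  · rintro y ⟨hy₁, hy₂⟩
    rcases (Nat.cast_nonneg (Fintype.card ι) : (0 : ℝ) ≤ Fintype.card ι).eq_or_lt with hn | hn
    · have : IsEmpty ι := Fintype.card_eq_zero_iff.mp (by exact_mod_cast hn.symm)
      exact ⟨a, by simp only [univ_eq_empty, sum_empty]; linarith⟩
    · refine ⟨fun i => Real.arccos (y / Fintype.card ι) - a i, ?_⟩
      have hc : Real.cos (Real.arccos (y / Fintype.card ι)) = y / Fintype.card ι :=
        Real.cos_arccos ((le_div_iff₀ hn).mpr (by linarith)) ((div_le_one hn).mpr hy₂)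
      simp [hc, mul_div_cancel₀ y hn.ne']

theorem addSubmonoidClosure_basisFun_union_neg (d : ℕ) :
    (AddSubmonoid.closure
        (Set.range (Pi.basisFun ℝ (Fin d)) ∪ -Set.range (Pi.basisFun ℝ (Fin d))) :
      Set (Fin d → ℝ)) = intLattice d := by
  rw [← AddSubgroup.closure_toAddSubmonoid, ← Submodule.span_int_eq_addSubgroupClosure]
  ext w
  simp only [SetLike.mem_coe, Submodule.mem_toAddSubmonoid,
    Module.Basis.mem_span_iff_repr_mem, Pi.basisFun_repr, intLattice, Set.mem_ofPred_eq,
    Set.mem_range, algebraMap_int_eq, eq_intCast, eq_comm]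

theorem exp_I_mul_add_exp_I_mul_neg (x : ℝ) :
    exp (I * x) + exp (I * ((-x : ℝ) : ℂ)) = ((2 * Real.cos x : ℝ) : ℂ) := by
  push_cast
  rw [Complex.two_cos]
  ring_nf

section Bouquet

variable (d : ℕ)

/-- Edge `castAdd d i` of the bouquet is the `i`-th loop and `natAdd d i` its reverse. -/
def bouquetInv : Fin (d + d) → Fin (d + d) :=
  Fin.append (Fin.natAdd d) (Fin.castAdd d)

def bouquetForm : Fin (d + d) → Fin d → ℝ :=
  Fin.append (fun i => Pi.single i 1) (fun i => -Pi.single i 1)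

variable {d}

@[simp]
theorem bouquetInv_castAdd (i : Fin d) : bouquetInv d (Fin.castAdd d i) = i.addNat d := by
  rw [← Fin.natAdd_eq_addNat]
  exact Fin.append_left _ _ i

@[simp]
theorem bouquetInv_addNat (i : Fin d) : bouquetInv d (i.addNat d) = Fin.castAdd d i := by
  rw [← Fin.natAdd_eq_addNat]
  exact Fin.append_right _ _ i

@[simp]
theorem bouquetForm_castAdd (i : Fin d) : bouquetForm d (Fin.castAdd d i) = Pi.single i 1 :=
  Fin.append_left _ _ i

@[simp]
theorem bouquetForm_addNat (i : Fin d) : bouquetForm d (i.addNat d) = -Pi.single i 1 := by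
  rw [← Fin.natAdd_eq_addNat]
  exact Fin.append_right _ _ i

theorem bouquetInv_ne_self (e : Fin (d + d)) : bouquetInv d e ≠ e := by
  induction e using Fin.addCases with
  | left i | right i => simpa [Fin.ext_iff] using i.pos.ne'

theorem bouquetInv_bouquetInv (e : Fin (d + d)) : bouquetInv d (bouquetInv d e) = e := by
  induction e using Fin.addCases <;> simp

theorem bouquetForm_bouquetInv (e : Fin (d + d)) :
    bouquetForm d (bouquetInv d e) = -bouquetForm d e := by
  induction e using Fin.addCases <;> simp

theorem bouquetForm_ne_zero (e : Fin (d + d)) : bouquetForm d e ≠ 0 := by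
  induction e using Fin.addCases <;> simp

theorem bouquetForm_apply_isInt (e : Fin (d + d)) (i : Fin d) :
    ∃ z : ℤ, bouquetForm d e i = z := by
  induction e using Fin.addCases with
  | left j => exact ⟨if i = j then 1 else 0, by simp [Pi.single_apply, apply_ite]⟩
  | right j => exact ⟨-if i = j then 1 else 0, by simp [Pi.single_apply, apply_ite]⟩

theorem suppCard_bouquetForm : suppCard (bouquetForm d) = 2 * d := by
  simp [suppCard, bouquetForm_ne_zero, two_mul]

theorem range_bouquetForm :
    Set.range (bouquetForm d) =
      Set.range (Pi.basisFun ℝ (Fin d)) ∪ -Set.range (Pi.basisFun ℝ (Fin d)) := by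
  ext w
  constructor
  · rintro ⟨e, rfl⟩
    induction e using Fin.addCases <;> simp
  · rintro (⟨i, rfl⟩ | ⟨i, hi⟩)
    · exact ⟨Fin.castAdd d i, by simp⟩
    · rw [Pi.basisFun_apply] at hi
      exact ⟨i.addNat d, by rw [bouquetForm_addNat, hi, neg_neg]⟩

theorem sum_exp_bouquetForm {φ : Fin (d + d) → ℝ} (hφ : ∀ e, φ (bouquetInv d e) = -φ e)
    (θ : Fin d → ℝ) :
    ∑ e, exp (I * ((φ e + ∑ i, bouquetForm d e i * θ i : ℝ) : ℂ)) =
      ((2 * ∑ i, Real.cos (φ (Fin.castAdd d i) + θ i) : ℝ) : ℂ) := by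
  rw [Fin.sum_univ_add, ← sum_add_distrib, mul_sum, Complex.ofReal_sum]
  refine sum_congr rfl fun i _ => ?_
  have hφi : φ (i.addNat d) = -φ (Fin.castAdd d i) := by simpa using hφ (Fin.castAdd d i)
  rw [← exp_I_mul_add_exp_I_mul_neg]
  simp [Pi.single_apply, hφi, add_comm]

theorem fiberSpectrum_bouquet {φ : Fin (d + d) → ℝ}
    (hφ : ∀ e, φ (bouquetInv d e) = -φ e) (Q : Fin 1 → ℝ) :
    {x : ℝ | ∃ (θ : Fin d → ℝ) (f : Fin 1 → ℂ), f ≠ 0 ∧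
        ∀ v, fiberLap (fun _ => 0) (fun _ => 0) (bouquetForm d) φ θ f v + (Q v : ℂ) * f v =
          (x : ℂ) * f v} =
      Set.Icc (Q 0) (Q 0 + 4 * d) := by
  rw [fiberSpectrum_of_unique]
  ext x
  simp only [sum_exp_bouquetForm hφ, Fintype.card_fin, Set.mem_ofPred_eq, Fin.default_eq_zero]
  norm_cast
  calc (∃ θ : Fin d → ℝ,
        ((d + d : ℕ) : ℝ) - 2 * ∑ i, Real.cos (φ (Fin.castAdd d i) + θ i) + Q 0 = x)
      ↔ (d + d + Q 0 - x) / 2 ∈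
          Set.range fun θ : Fin d → ℝ => ∑ i, Real.cos (φ (Fin.castAdd d i) + θ i) :=
        exists_congr fun θ => by push_cast; constructor <;> intro h <;> linarith
    _ ↔ x ∈ Set.Icc (Q 0) (Q 0 + (4 * d : ℕ)) := by
        rw [range_sum_cos, Fintype.card_fin, Set.mem_Icc, Set.mem_Icc]
        push_cast
        constructor <;> rintro ⟨h₁, h₂⟩ <;> constructor <;> linarith

end Bouquet

/-- For every `d > 0` there is a finite connected multigraph with an
integer-valued 1-form `m : E → ℝ^d` with `#supp m = 2d` and flux set `ℤ^d`,
such that for every potential `Q` and every 1-form `φ` the Lebesgue measure of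
the union over `θ` of the spectra of `Δ_{m,φ}(θ) + Q` equals
`4d = 2·#supp m`; i.e. the spectral estimate becomes an identity. -/
theorem exists_graph_measure_identity (d : ℕ) (hd : 0 < d) :
    ∃ (nv ne : ℕ) (o t : Fin ne → Fin nv) (inv : Fin ne → Fin ne),
      0 < nv ∧
      (∀ e, inv e ≠ e) ∧ (∀ e, inv (inv e) = e) ∧
      (∀ e, o (inv e) = t e) ∧ (∀ e, t (inv e) = o e) ∧
      MGConnected o t ∧
      ∃ m : Fin ne → Fin d → ℝ,
        (∀ e, m (inv e) = - m e) ∧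
        (∀ e i, ∃ z : ℤ, m e i = (z : ℝ)) ∧
        suppCard m = 2 * d ∧
        fluxSet o t m = intLattice d ∧
        ∀ (Q : Fin nv → ℝ) (φ : Fin ne → ℝ), (∀ e, φ (inv e) = - φ e) →
          MeasureTheory.volume
            {x : ℝ | ∃ (θ : Fin d → ℝ) (f : Fin nv → ℂ), f ≠ 0 ∧
              ∀ v, fiberLap o t m φ θ f v + (Q v : ℂ) * f v = (x : ℂ) * f v}
            = ((4 * d : ℕ) : ENNReal) := by
  have : Nonempty (Fin (d + d)) := ⟨⟨0, by omega⟩⟩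
  refine ⟨1, d + d, fun _ => 0, fun _ => 0, bouquetInv d, one_pos, bouquetInv_ne_self,
    bouquetInv_bouquetInv, fun _ => rfl, fun _ => rfl, mgConnected_of_unique _ _, bouquetForm d,
    bouquetForm_bouquetInv, bouquetForm_apply_isInt, suppCard_bouquetForm, ?_, ?_⟩
  · rw [fluxSet_of_unique _ _ _ _ bouquetForm_bouquetInv, range_bouquetForm,
      addSubmonoidClosure_basisFun_union_neg]
  · intro Q φ hφ
    rw [fiberSpectrum_bouquet hφ, Real.volume_Icc, add_sub_cancel_left, ← Nat.cast_ofNat,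
      ← Nat.cast_mul, ENNReal.ofReal_natCast]
end
end
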